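/- Let n ≥ 3 and let reports be pairwise rankings: each individual k reports, for each ordered pair of distinct individuals (i,j) with i ≠ k and j ≠ k, whether k ranks i above j (the report is antisymmetric in (i,j)). Let s be a scoring rule assigning a real score s_i(r) to each individual i at each report profile r, satisfying: (i) s_i(r) is independent of i's own report, i.e. s_i(r) = s_i(r') whenever r_{-i} = r'_{-i}; and (ii) monotonicity: if the profile r' is obtained from r by having a single reporter k change his comparison of one pair from ranking i below some individual to ranking i above that individual (all other comparisons unchanged), then s_i(r') > s_i(r). Then there exist a threshold \underline{s}, a report profile r, two distinct individuals i and j, and an alternative report for j producing a profile r' that differs from r only in j's report, such that: i is not in the targeted set T(r) = {m : s_m(r) > \underline{s}} but i is in T(r'), and j's membership in the targeted set is the same under r and r'. Hence the three-step mechanism with a monotonic scoring rule is not group-strategy-proof: it is manipulable by the coalition {i,j}. -/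

import Mathlib

/-!
Start from a profile in which everybody reports one fixed linear order, with `i` below `m`, and
let a third individual `j` raise `i` over `m` in his report. By monotonicity this strictly
raises `i`'s score, while `j`'s own score does not move because scores exclude own reports.
With the cutoff set at `i`'s original score, `j`'s deviation gets `i` targeted at no cost to `j`,
so the coalition `{i, j}` manipulates the mechanism.
-/

open Function

namespace PairwiseReport

variable {N : Type*}

/-- `r k a b = true` means that reporter `k` ranks `a` above `b`. -/
def IsAntisymm (r : N → N → N → Bool) : Prop :=
  ∀ k a b : N, a ≠ b → a ≠ k → b ≠ k → r k a b = !(r k b a)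

def ExcludesOwnReports (s : (N → N → N → Bool) → N → ℝ) : Prop :=
  ∀ (i : N) (r r' : N → N → N → Bool), (∀ m : N, m ≠ i → r m = r' m) → s r i = s r' i

def IsMonotonic (s : (N → N → N → Bool) → N → ℝ) : Prop :=
  ∀ (r r' : N → N → N → Bool) (k i m : N),
    i ≠ m → i ≠ k → m ≠ k →
    r k i m = false → r' k i m = true → r' k m i = false →
    (∀ q a b : N, ¬(q = k ∧ ((a = i ∧ b = m) ∨ (a = m ∧ b = i))) → r' q a b = r q a b) →
    s r i < s r' i

def ofLinearOrder [LinearOrder N] : N → N → N → Bool :=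
  fun _ a b => decide (b < a)

theorem isAntisymm_ofLinearOrder [LinearOrder N] : IsAntisymm (ofLinearOrder (N := N)) := by
  intro k a b hab _ _
  rcases hab.lt_or_gt with h | h <;> simp [ofLinearOrder, h, h.le]

variable [DecidableEq N]

def raise (r : N → N → N → Bool) (j i m : N) : N → N → N → Bool :=
  update r j fun a b => if a = i ∧ b = m then true else if a = m ∧ b = i then false else r j a b

variable {r : N → N → N → Bool} {j i m : N}

theorem raise_of_ne {q : N} (hq : q ≠ j) : raise r j i m q = r q :=
  update_of_ne hq _ _

theorem raise_self_left : raise r j i m j i m = true := by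
  simp [raise]

theorem raise_self_right (him : i ≠ m) : raise r j i m j m i = false := by
  simp [raise, him.symm]

theorem raise_apply_of_not {q a b : N}
    (h : ¬(q = j ∧ ((a = i ∧ b = m) ∨ (a = m ∧ b = i)))) : raise r j i m q a b = r q a b := by
  by_cases hq : q = j
  · subst hq
    simp only [true_and, not_or] at h
    simp only [raise, update_self, if_neg h.1, if_neg h.2]
  · rw [raise_of_ne hq]

theorem IsAntisymm.raise (hr : IsAntisymm r) (him : i ≠ m) : IsAntisymm (raise r j i m) := by
  intro k a b hab hak hbk
  by_cases hpair : k = j ∧ ((a = i ∧ b = m) ∨ (a = m ∧ b = i))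
  · obtain ⟨rfl, ⟨rfl, rfl⟩ | ⟨rfl, rfl⟩⟩ := hpair <;>
      rw [raise_self_left, raise_self_right him] <;> rfl
  · have hswap : ¬(k = j ∧ ((b = i ∧ a = m) ∨ (b = m ∧ a = i))) := by tauto
    rw [raise_apply_of_not hpair, raise_apply_of_not hswap]
    exact hr k a b hab hak hbk

theorem IsMonotonic.lt_raise {s : (N → N → N → Bool) → N → ℝ} (hs : IsMonotonic s)
    (him : i ≠ m) (hij : i ≠ j) (hmj : m ≠ j) (hbelow : r j i m = false) :
    s r i < s (raise r j i m) i :=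
  hs r _ j i m him hij hmj hbelow raise_self_left (raise_self_right him)
    fun _ _ _ => raise_apply_of_not

theorem ExcludesOwnReports.raise_self {s : (N → N → N → Bool) → N → ℝ}
    (hs : ExcludesOwnReports s) : s (raise r j i m) j = s r j :=
  hs j _ _ fun _ hq => raise_of_ne hq

end PairwiseReport

open PairwiseReport in
/-- **Proposition 2, failure of group-strategy-proofness.**
Each individual `k` reports, for each ordered pair `(a,b)` of distinct individuals
different from `k`, whether `k` ranks `a` above `b` (`r k a b = true`), reports
being antisymmetric in the pair.  Suppose `n ≥ 3` and the scoring rule `s`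
(i) excludes own reports, and (ii) is monotonic: if a single reporter `k` flips one
comparison from ranking `i` below `m` to ranking `i` above `m` (all other
comparisons unchanged) then `i`'s score strictly increases.  Then there exist a
threshold `sbar`, a (valid, antisymmetric) report profile `r`, individuals `i ≠ j`,
and a profile `r'` differing from `r` only in `j`'s report, such that `i` is not
targeted at `r` but is targeted at `r'`, while `j`'s membership in the targeted
set is the same under `r` and `r'`: the mechanism is manipulable by `{i, j}`,
hence not group-strategy-proof. -/
theorem mechanism_not_group_strategy_proof
    {N : Type*} [Fintype N] [DecidableEq N] (hn : 3 ≤ Fintype.card N)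
    (s : (N → N → N → Bool) → N → ℝ)
    (h_own : ∀ (i : N) (r r' : N → N → N → Bool),
      (∀ m : N, m ≠ i → r m = r' m) → s r i = s r' i)
    (h_mono : ∀ (r r' : N → N → N → Bool) (k i m : N),
      i ≠ m → i ≠ k → m ≠ k →
      r k i m = false → r' k i m = true → r' k m i = false →
      (∀ q a b : N, ¬(q = k ∧ ((a = i ∧ b = m) ∨ (a = m ∧ b = i))) →
        r' q a b = r q a b) →
      s r i < s r' i) :
    ∃ (sbar : ℝ) (r r' : N → N → N → Bool) (i j : N), i ≠ j ∧
      (∀ k a b : N, a ≠ b → a ≠ k → b ≠ k → r k a b = !(r k b a)) ∧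
      (∀ k a b : N, a ≠ b → a ≠ k → b ≠ k → r' k a b = !(r' k b a)) ∧
      (∀ m : N, m ≠ j → r' m = r m) ∧
      ¬ (s r i > sbar) ∧ (s r' i > sbar) ∧
      ((s r j > sbar) ↔ (s r' j > sbar)) := by
  let : LinearOrder N := IsWellOrder.linearOrder WellOrderingRel
  obtain ⟨a, b, j, hab, haj, hbj⟩ := Fintype.two_lt_card_iff.mp hn
  obtain ⟨i, m, him, hij, hmj⟩ : ∃ i m : N, i < m ∧ i ≠ j ∧ m ≠ j := by
    rcases hab.lt_or_gt with h | h
    exacts [⟨a, b, h, haj, hbj⟩, ⟨b, a, h, hbj, haj⟩]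
  have hbelow : ofLinearOrder j i m = false := by simp [ofLinearOrder, him.le]
  refine ⟨s ofLinearOrder i, ofLinearOrder, raise ofLinearOrder j i m, i, j, hij,
    isAntisymm_ofLinearOrder, isAntisymm_ofLinearOrder.raise him.ne, fun _ => raise_of_ne,
    lt_irrefl _, IsMonotonic.lt_raise h_mono him.ne hij hmj hbelow, ?_⟩
  rw [ExcludesOwnReports.raise_self h_own]
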